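/- arXiv:1604.02967 — 8 statements merged into one kernel-verified Lean document; each statement's English description precedes it below -/
import Mathlib

section
/- Let p be an odd prime and let m, k be positive integers such that m/gcd(k,m) is odd. Then gcd(p^k + 1, p^m - 1) = 2. -/
theorem gcd_pk_add_one_pm_sub_one (p m k : ℕ) (hp : p.Prime) (hodd : Odd p)
    (hm : 0 < m) (hk : 0 < k) (h : Odd (m / Nat.gcd k m)) :
    Nat.gcd (p ^ k + 1) (p ^ m - 1) = 2 := by
  have hp1 : 1 < p := hp.one_lt
  set d := Nat.gcd k m with hd
  have hdk : d ∣ k := Nat.gcd_dvd_left k m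
  have hdm : d ∣ m := Nat.gcd_dvd_right k m
  have hd0 : 0 < d := Nat.gcd_pos_of_pos_right k hm
  obtain ⟨s, hs⟩ := hdk
  obtain ⟨t, ht⟩ := hdm
  have htdiv : m / d = t := by rw [ht, Nat.mul_div_cancel_left _ hd0]
  have htodd : Odd t := by rwa [htdiv] at h
  have hst : Nat.Coprime s t := by
    have h1 : d * Nat.gcd s t = d * 1 := by
      rw [← Nat.gcd_mul_left, ← hs, ← ht, mul_one]
    exact Nat.eq_of_mul_eq_mul_left hd0 h1
  have h2t : Nat.Coprime 2 t := by
    rw [Nat.coprime_two_left]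
    exact htodd
  have hgcd2k : Nat.gcd (2 * k) m = d := by
    rw [hs, ht, ← mul_assoc, mul_comm 2 d, mul_assoc, Nat.gcd_mul_left,
      h2t.gcd_mul_left_cancel s, hst]
    exact mul_one d
  set g := Nat.gcd (p ^ k + 1) (p ^ m - 1) with hg
  have hg1 : g ∣ p ^ k + 1 := Nat.gcd_dvd_left _ _
  have hg2 : g ∣ p ^ m - 1 := Nat.gcd_dvd_right _ _
  have hpk1 : 1 ≤ p ^ k := Nat.one_le_pow _ _ hp.pos
  have hpm1 : 1 ≤ p ^ m := Nat.one_le_pow _ _ hp.pos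
  have hpd1 : 1 ≤ p ^ d := Nat.one_le_pow _ _ hp.pos
  -- work in ZMod g
  have hcast1 : ((p : ZMod g)) ^ k = -1 := by
    have h0 : ((p ^ k + 1 : ℕ) : ZMod g) = 0 :=
      (ZMod.natCast_eq_zero_iff _ _).mpr hg1
    push_cast at h0
    linear_combination h0
  have hcast2 : ((p : ZMod g)) ^ m = 1 := by
    have h0 : ((p ^ m - 1 : ℕ) : ZMod g) = 0 :=
      (ZMod.natCast_eq_zero_iff _ _).mpr hg2
    rw [Nat.cast_sub hpm1] at h0
    push_cast at h0
    linear_combination h0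
  have h2k : ((p : ZMod g)) ^ (2 * k) = 1 := by
    rw [mul_comm, pow_mul, hcast1]
    ring
  have hord : orderOf ((p : ZMod g)) ∣ d := by
    rw [← hgcd2k]
    exact Nat.dvd_gcd (orderOf_dvd_of_pow_eq_one h2k) (orderOf_dvd_of_pow_eq_one hcast2)
  have hpd : ((p : ZMod g)) ^ d = 1 := orderOf_dvd_iff_pow_eq_one.mp hord
  have hgd : g ∣ p ^ d - 1 := by
    rw [← ZMod.natCast_eq_zero_iff, Nat.cast_sub hpd1]
    push_cast
    rw [hpd]
    ring
  have hdk' : p ^ d - 1 ∣ p ^ k - 1 := by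
    rw [hs, pow_mul]
    simpa using Nat.sub_dvd_pow_sub_pow (p ^ d) 1 s
  have hgk : g ∣ p ^ k - 1 := hgd.trans hdk'
  have hgdvd2 : g ∣ 2 := by
    have h2 : (p ^ k + 1) - (p ^ k - 1) = 2 := by omega
    have := Nat.dvd_sub hg1 hgk
    rwa [h2] at this
  have h2g : 2 ∣ g := by
    obtain ⟨a, ha⟩ := hodd.pow (n := k)
    obtain ⟨b, hb⟩ := hodd.pow (n := m)
    exact Nat.dvd_gcd ⟨a + 1, by omega⟩ ⟨b, by omega⟩
  exact Nat.dvd_antisymm hgdvd2 h2g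
end

section
/- Let p be an odd prime and let m, k be positive integers with e = gcd(k,m) such that m/e ≥ 3 is odd. Then there exist exactly two distinct residues d in Z/(p^m - 1) satisfying d(p^k + 1) ≡ 2 (mod p^m - 1); moreover one of them satisfies d ≡ 1 (mod p^e - 1) and the other satisfies d ≡ 1 + (p^e - 1)/2 (mod p^e - 1). -/
open Finset

lemma my_dvd_pow_gcd_sub_one {n p a b : ℕ} (hp : 1 ≤ p)
    (ha : n ∣ p ^ a - 1) (hb : n ∣ p ^ b - 1) : n ∣ p ^ Nat.gcd a b - 1 := by
  have key : ∀ c : ℕ, (n ∣ p ^ c - 1) ↔ ((p : ZMod n) ^ c = 1) := by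
    intro c
    have h1 : 1 ≤ p ^ c := Nat.one_le_pow _ _ hp
    rw [← Nat.modEq_iff_dvd' h1]
    constructor
    · intro h
      have := (ZMod.natCast_eq_natCast_iff _ _ _).mpr h.symm
      push_cast at this
      simpa using this
    · intro h
      have : ((p ^ c : ℕ) : ZMod n) = ((1 : ℕ) : ZMod n) := by push_cast; simpa using h
      exact ((ZMod.natCast_eq_natCast_iff _ _ _).mp this).symm
  rw [key] at ha hb ⊢
  exact orderOf_dvd_iff_pow_eq_one.mp
    (Nat.dvd_gcd (orderOf_dvd_of_pow_eq_one ha) (orderOf_dvd_of_pow_eq_one hb))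

lemma my_sq_identity {q : ℕ} (hq : 1 ≤ q) : (q + 1) * (q - 1) = q ^ 2 - 1 := by
  obtain ⟨r, hr⟩ := Nat.exists_eq_add_of_le hq
  subst hr
  simp only [Nat.add_sub_cancel_left]
  symm
  apply Nat.sub_eq_of_eq_add
  ring

lemma my_gcd_two_k {k m e : ℕ} (hk : 0 < k) (hm : 0 < m) (he : e = Nat.gcd k m)
    (hto : Odd (m / e)) : Nat.gcd (2 * k) m = e := by
  have he0 : 0 < e := he ▸ Nat.gcd_pos_of_pos_left m hk
  have hek : e ∣ k := he ▸ Nat.gcd_dvd_left k m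
  have hem : e ∣ m := he ▸ Nat.gcd_dvd_right k m
  have h1 : e ∣ Nat.gcd (2 * k) m := Nat.dvd_gcd (hek.mul_left 2) hem
  have h2 : Nat.gcd (2 * k) m ∣ e * 2 := by
    have : Nat.gcd (2 * k) m ∣ Nat.gcd (2 * k) (2 * m) :=
      Nat.dvd_gcd (Nat.gcd_dvd_left _ _) ((Nat.gcd_dvd_right _ _).mul_left 2)
    rwa [Nat.gcd_mul_left, ← he, mul_comm 2 e] at this
  obtain ⟨s, hs⟩ := h1
  have hs2 : s ∣ 2 := (Nat.mul_dvd_mul_iff_left he0).mp (hs ▸ h2)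
  have hs0 : 0 < s := by
    rcases Nat.eq_zero_or_pos s with h | h
    · exfalso
      have := Nat.gcd_dvd_right (2 * k) m
      rw [hs, h, mul_zero] at this
      simp at this; omega
    · exact h
  have hs_le : s ≤ 2 := Nat.le_of_dvd (by norm_num) hs2
  interval_cases s
  · omega
  · exfalso
    have : e * 2 ∣ m := hs ▸ Nat.gcd_dvd_right (2 * k) m
    have h2t : 2 ∣ m / e := by
      obtain ⟨c, hc⟩ := this
      refine ⟨c, ?_⟩
      rw [hc, mul_assoc, Nat.mul_div_cancel_left _ he0]
    rw [Nat.odd_iff] at hto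
    omega

lemma my_gcd_eq_two {p m k e : ℕ} (hp : 1 < p) (hpo : Odd p) (hk : 0 < k) (hm : 0 < m)
    (he : e = Nat.gcd k m) (hto : Odd (m / e)) :
    Nat.gcd (p ^ k + 1) (p ^ m - 1) = 2 := by
  have he0 : 0 < e := he ▸ Nat.gcd_pos_of_pos_left m hk
  have hek : e ∣ k := he ▸ Nat.gcd_dvd_left k m
  set g := Nat.gcd (p ^ k + 1) (p ^ m - 1) with hgdef
  have hg1 : g ∣ p ^ k + 1 := Nat.gcd_dvd_left _ _
  have hg2 : g ∣ p ^ m - 1 := Nat.gcd_dvd_right _ _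
  have hpk1 : 1 ≤ p ^ k := Nat.one_le_pow _ _ (by omega)
  have h2k : g ∣ p ^ (2 * k) - 1 := by
    have : (p ^ k + 1) * (p ^ k - 1) = p ^ (2 * k) - 1 := by
      rw [pow_mul', ← my_sq_identity hpk1]
    rw [← this]
    exact Dvd.dvd.mul_right hg1 _
  have hge : g ∣ p ^ e - 1 := by
    have := my_dvd_pow_gcd_sub_one (n := g) (by omega : 1 ≤ p) h2k hg2
    rwa [my_gcd_two_k hk hm he hto] at this
  have hke : g ∣ p ^ k - 1 := by
    refine hge.trans ?_
    have := Nat.sub_dvd_pow_sub_pow (p ^ e) 1 (k / e)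
    rwa [← pow_mul, Nat.mul_div_cancel' hek, one_pow] at this
  have hgd2 : g ∣ 2 := by
    have := Nat.dvd_sub hg1 hke
    have heq : p ^ k + 1 - (p ^ k - 1) = 2 := by omega
    rwa [heq] at this
  have h2g : 2 ∣ g := by
    refine Nat.dvd_gcd ?_ ?_
    · have : Odd (p ^ k) := hpo.pow
      rw [Nat.odd_iff] at this; omega
    · have h1 : Odd (p ^ m) := hpo.pow
      rw [Nat.odd_iff] at h1
      have : 1 ≤ p ^ m := Nat.one_le_pow _ _ (by omega)
      omega
  exact Nat.dvd_antisymm hgd2 h2g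

lemma my_modEq_of_dvd {a b n d : ℕ} (hd : d ∣ n) (h : a ≡ b [MOD n]) : a ≡ b [MOD d] := by
  unfold Nat.ModEq at h ⊢
  rw [← Nat.mod_mod_of_dvd a hd, ← Nat.mod_mod_of_dvd b hd, h]

theorem two_solutions_of_congruence (p m k : ℕ) (hp : p.Prime) (hodd : Odd p)
    (hk : 0 < k) (e : ℕ) (he : e = Nat.gcd k m)
    (hge : 3 ≤ m / e) (hoddq : Odd (m / e)) :
    ∃ d₁ d₂ : ZMod (p ^ m - 1), d₁ ≠ d₂ ∧
      d₁ * (p ^ k + 1) = 2 ∧ d₂ * (p ^ k + 1) = 2 ∧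
      (∀ d : ZMod (p ^ m - 1), d * (p ^ k + 1) = 2 → d = d₁ ∨ d = d₂) ∧
      d₁.val ≡ 1 [MOD p ^ e - 1] ∧
      d₂.val ≡ 1 + (p ^ e - 1) / 2 [MOD p ^ e - 1] := by
  have hp2 : 2 ≤ p := hp.two_le
  have hpodd : p % 2 = 1 := Nat.odd_iff.mp hodd
  have hp3 : 3 ≤ p := by omega
  have he0 : 0 < e := he ▸ Nat.gcd_pos_of_pos_left m hk
  have hek : e ∣ k := he ▸ Nat.gcd_dvd_left k m
  have hem : e ∣ m := he ▸ Nat.gcd_dvd_right k m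
  set t := m / e with htdef
  have hmt : m = e * t := (Nat.mul_div_cancel' hem).symm
  have hm0 : 0 < m := by
    rw [hmt]; exact Nat.mul_pos he0 (by omega)
  have hm3 : 3 ≤ m := by
    calc 3 ≤ t := hge
    _ = 1 * t := (one_mul t).symm
    _ ≤ e * t := Nat.mul_le_mul_right t he0
    _ = m := hmt.symm
  set N := p ^ m - 1 with hNdef
  have hpm1 : 1 ≤ p ^ m := Nat.one_le_pow _ _ (by omega)
  have hpm27 : 27 ≤ p ^ m := by
    calc (27 : ℕ) = 3 ^ 3 := by norm_num
    _ ≤ p ^ 3 := Nat.pow_le_pow_left hp3 3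
    _ ≤ p ^ m := Nat.pow_le_pow_right (by omega) hm3
  have hN26 : 26 ≤ N := by omega
  haveI : NeZero N := ⟨by omega⟩
  have hoddpk : p ^ k % 2 = 1 := Nat.odd_iff.mp hodd.pow
  have hoddpm : p ^ m % 2 = 1 := Nat.odd_iff.mp hodd.pow
  have hoddpe : p ^ e % 2 = 1 := Nat.odd_iff.mp hodd.pow
  have hpe1 : 1 ≤ p ^ e := Nat.one_le_pow _ _ (by omega)
  have hpk1 : 1 ≤ p ^ k := Nat.one_le_pow _ _ (by omega)
  obtain ⟨a, ha⟩ : 2 ∣ p ^ k + 1 := by omega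
  obtain ⟨n', hn'⟩ : 2 ∣ N := by omega
  obtain ⟨h', hh'⟩ : 2 ∣ p ^ e - 1 := by omega
  have hn'lt : n' < N := by omega
  have hn'0 : 0 < n' := by omega
  have hcop : Nat.Coprime a n' := by
    have hg : Nat.gcd (2 * a) (2 * n') = 2 := by
      rw [← ha, ← hn']
      exact my_gcd_eq_two hp.one_lt hodd hk hm0 he hoddq
    rw [Nat.gcd_mul_left] at hg
    have : Nat.gcd a n' = 1 := by omega
    exact this
  -- key geometric identity over ℤ
  have hkey : ((p : ℤ) ^ k + 1) * (∑ i ∈ Finset.range t, (-(p : ℤ) ^ k) ^ i)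
      = (p : ℤ) ^ (k * t) + 1 := by
    have hgs := geom_sum_mul (-(p : ℤ) ^ k) t
    rw [Odd.neg_pow hoddq, ← pow_mul] at hgs
    linear_combination -hgs
  set D : ℤ := ∑ i ∈ Finset.range t, (-(p : ℤ) ^ k) ^ i with hDdef
  set d₁ : ZMod N := ((D : ℤ) : ZMod N) with hd₁def
  have hpm : (p : ZMod N) ^ m = 1 := by
    have hNp : p ^ m = N + 1 := by omega
    calc (p : ZMod N) ^ m = ((p ^ m : ℕ) : ZMod N) := by push_cast; ring
    _ = ((N + 1 : ℕ) : ZMod N) := by rw [hNp]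
    _ = 1 := by push_cast; simp
  have hkt : k * t = (k / e) * m := by
    calc k * t = e * (k / e) * t := by rw [Nat.mul_div_cancel' hek]
    _ = (k / e) * (e * t) := by ring
    _ = (k / e) * m := by rw [← hmt]
  have hpkt : (p : ZMod N) ^ (k * t) = 1 := by
    rw [hkt, mul_comm, pow_mul, hpm, one_pow]
  have heq1 : d₁ * ((p : ZMod N) ^ k + 1) = 2 := by
    have hc := congrArg (fun z : ℤ => (z : ZMod N)) hkey
    push_cast at hc
    rw [hpkt] at hc
    rw [hd₁def, mul_comm]
    rw [hc]
    norm_num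
  set d₂ : ZMod N := d₁ + (n' : ZMod N) with hd₂def
  have hn'ne : ((n' : ℕ) : ZMod N) ≠ 0 := by
    rw [Ne, ZMod.natCast_eq_zero_iff]
    intro hdvd
    exact absurd (Nat.le_of_dvd hn'0 hdvd) (by omega)
  have hne : d₁ ≠ d₂ := by
    intro hcontra
    apply hn'ne
    have := hcontra.symm
    rw [hd₂def, left_eq_add] at hcontra
    exact hcontra
  have hXcast : ((p : ZMod N) ^ k + 1) = (((p ^ k + 1 : ℕ)) : ZMod N) := by push_cast; ring
  have hn'X : ((n' : ℕ) : ZMod N) * ((p : ZMod N) ^ k + 1) = 0 := by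
    rw [hXcast, ← Nat.cast_mul, ZMod.natCast_eq_zero_iff]
    refine ⟨a, ?_⟩
    rw [ha, hn']; ring
  have heq2 : d₂ * ((p : ZMod N) ^ k + 1) = 2 := by
    rw [hd₂def, add_mul, heq1, hn'X, add_zero]
  -- uniqueness
  have huniq : ∀ d : ZMod N, d * ((p : ZMod N) ^ k + 1) = 2 → d = d₁ ∨ d = d₂ := by
    intro d hd
    have hsub : (d - d₁) * ((p : ZMod N) ^ k + 1) = 0 := by
      rw [sub_mul, hd, heq1, sub_self]
    set c := d - d₁ with hcdef
    have hcv : ((c.val : ℕ) : ZMod N) = c := ZMod.natCast_rightInverse c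
    have h0 : (((c.val * (p ^ k + 1) : ℕ)) : ZMod N) = 0 := by
      rw [Nat.cast_mul, hcv, ← hXcast, hsub]
    have hdvd : N ∣ c.val * (p ^ k + 1) := (ZMod.natCast_eq_zero_iff _ _).mp h0
    have h1 : n' ∣ c.val * a := by
      obtain ⟨w, hw⟩ := hdvd
      refine ⟨w, ?_⟩
      have h2 : 2 * (c.val * a) = 2 * (n' * w) := by
        rw [ha] at hw
        calc 2 * (c.val * a) = c.val * (2 * a) := by ring
        _ = N * w := hw
        _ = 2 * n' * w := by rw [hn']
        _ = 2 * (n' * w) := by ring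
      omega
    have h2 : n' ∣ c.val := (Nat.Coprime.dvd_of_dvd_mul_right hcop.symm) h1
    have hclt : c.val < N := ZMod.val_lt c
    obtain ⟨w, hw2⟩ := h2
    have hwlt : w < 2 := by
      by_contra hcon
      push_neg at hcon
      have : n' * 2 ≤ n' * w := Nat.mul_le_mul_left n' hcon
      omega
    interval_cases w
    · left
      have : c.val = 0 := by omega
      have hc0 : c = 0 := by
        rw [← hcv, this, Nat.cast_zero]
      rw [hcdef, sub_eq_zero] at hc0
      exact hc0
    · right
      have hcv' : c.val = n' := by omega
      have : c = ((n' : ℕ) : ZMod N) := by rw [← hcv, hcv']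
      rw [hcdef, sub_eq_iff_eq_add] at this
      rw [this, hd₂def, add_comm]
  -- p^e - 1 divides N
  have hdvdeN : p ^ e - 1 ∣ N := by
    have := Nat.sub_dvd_pow_sub_pow (p ^ e) 1 t
    rwa [← pow_mul, ← hmt, one_pow] at this
  -- d₁.val ≡ D mod N over ℤ
  have hvd₁ : (d₁.val : ℤ) ≡ D [ZMOD (N : ℕ)] := by
    rw [← ZMod.intCast_eq_intCast_iff]
    have : ((d₁.val : ℕ) : ZMod N) = d₁ := ZMod.natCast_rightInverse d₁
    push_cast at this ⊢
    rw [this]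
  have hMc : (((p ^ e - 1 : ℕ)) : ℤ) = (p : ℤ) ^ e - 1 := by
    push_cast [hpe1]
    ring
  have hvd₁e : (d₁.val : ℤ) ≡ D [ZMOD ((p ^ e - 1 : ℕ))] :=
    hvd₁.of_dvd (Int.natCast_dvd_natCast.mpr hdvdeN)
  -- D ≡ 1 mod p^e - 1
  have hpek : ((p : ℤ) ^ e - 1) ∣ (p : ℤ) ^ k - 1 := by
    have := sub_dvd_pow_sub_pow ((p : ℤ) ^ e) 1 (k / e)
    rwa [← pow_mul, Nat.mul_div_cancel' hek, one_pow] at this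
  have hD1 : D ≡ 1 [ZMOD ((p ^ e - 1 : ℕ))] := by
    refine Int.ModEq.symm ?_
    rw [Int.modEq_iff_dvd]
    have hsum1 : (∑ i ∈ Finset.range t, (-1 : ℤ) ^ i) = 1 := by
      rw [neg_one_geom_sum, if_neg (by simpa [Nat.not_even_iff_odd] using hoddq)]
    have hDsub : D - 1 = ∑ i ∈ Finset.range t, ((-(p : ℤ) ^ k) ^ i - (-1 : ℤ) ^ i) := by
      rw [Finset.sum_sub_distrib, hsum1, hDdef]
    rw [hDsub, hMc]
    refine Finset.dvd_sum ?_
    intro i _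
    have hterm : (-(p : ℤ) ^ k) ^ i - (-1 : ℤ) ^ i = (-1 : ℤ) ^ i * (((p : ℤ) ^ k) ^ i - 1) := by
      rw [neg_pow, neg_pow]
      ring
    rw [hterm]
    refine Dvd.dvd.mul_left ?_ _
    exact hpek.trans (by simpa using sub_dvd_pow_sub_pow ((p : ℤ) ^ k) 1 i)
  have hvd₁1 : (d₁.val : ℤ) ≡ ((1 : ℕ) : ℤ) [ZMOD ((p ^ e - 1 : ℕ))] := by
    exact_mod_cast hvd₁e.trans hD1
  have hd₁mod : d₁.val ≡ 1 [MOD p ^ e - 1] := Int.natCast_modEq_iff.mp hvd₁1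
  -- n' ≡ h' mod p^e - 1
  have hn'h' : n' ≡ h' [MOD p ^ e - 1] := by
    rw [← Int.natCast_modEq_iff]
    refine Int.ModEq.symm ?_
    rw [Int.modEq_iff_dvd, hMc]
    -- 2*(p^e-1) ∣ p^(e*(t-1)) - 1
    have hts : t - 1 = 2 * ((t - 1) / 2) := by
      rw [Nat.odd_iff] at hoddq
      omega
    have hbig : 2 * (p ^ e - 1) ∣ p ^ (e * (t - 1)) - 1 := by
      have h2e : 2 * (p ^ e - 1) ∣ p ^ (2 * e) - 1 := by
        have hsq : (p ^ e + 1) * (p ^ e - 1) = p ^ (2 * e) - 1 := by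
          rw [pow_mul', ← my_sq_identity hpe1]
        obtain ⟨v, hv⟩ : 2 ∣ p ^ e + 1 := by omega
        refine ⟨v, ?_⟩
        rw [← hsq, hv]; ring
      refine h2e.trans ?_
      have hexp : 2 * e * ((t - 1) / 2) = e * (t - 1) := by
        conv_rhs => rw [hts]
        ring
      have := Nat.sub_dvd_pow_sub_pow (p ^ (2 * e)) 1 ((t - 1) / 2)
      rwa [← pow_mul, one_pow, hexp] at this
    obtain ⟨c, hc⟩ := hbig
    have hpet1 : 1 ≤ p ^ (e * (t - 1)) := Nat.one_le_pow _ _ (by omega)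
    -- cast everything to ℤ
    have hcI : (p : ℤ) ^ (e * (t - 1)) = 2 * ((p : ℤ) ^ e - 1) * (c : ℤ) + 1 := by
      have : p ^ (e * (t - 1)) = 2 * (p ^ e - 1) * c + 1 := by omega
      have := congrArg (fun x : ℕ => (x : ℤ)) this
      push_cast [hpe1] at this
      linarith
    have hmI : (p : ℤ) ^ m = 2 * (n' : ℤ) + 1 := by
      have : p ^ m = 2 * n' + 1 := by omega
      exact_mod_cast congrArg (fun x : ℕ => (x : ℤ)) this
    have heI : (p : ℤ) ^ e = 2 * (h' : ℤ) + 1 := by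
      have : p ^ e = 2 * h' + 1 := by omega
      exact_mod_cast congrArg (fun x : ℕ => (x : ℤ)) this
    have hsplit : (p : ℤ) ^ m = (p : ℤ) ^ e * (p : ℤ) ^ (e * (t - 1)) := by
      rw [← pow_add]
      congr 1
      have h1 : e + e * (t - 1) = e * t := by
        obtain ⟨t', ht'⟩ := Nat.exists_eq_add_of_le (show 1 ≤ t by omega)
        rw [ht', Nat.add_sub_cancel_left]
        ring
      rw [h1, ← hmt]
    refine ⟨(p : ℤ) ^ e * (c : ℤ), ?_⟩
    have h2 : (2 : ℤ) * ((n' : ℤ) - (h' : ℤ)) = 2 * (((p : ℤ) ^ e - 1) * ((p : ℤ) ^ e * (c : ℤ))) := by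
      linear_combination -hmI + heI + hsplit + (p : ℤ) ^ e * hcI
    linarith
  -- d₂.val
  have hvadd : d₂.val ≡ d₁.val + n' [MOD N] := by
    have : d₂.val = (d₁.val + (↑n' : ZMod N).val) % N := ZMod.val_add d₁ (n' : ZMod N)
    rw [this, ZMod.val_natCast_of_lt hn'lt]
    exact Nat.mod_modEq _ _
  have hd₂mod : d₂.val ≡ 1 + (p ^ e - 1) / 2 [MOD p ^ e - 1] := by
    have h1 : d₂.val ≡ d₁.val + n' [MOD p ^ e - 1] := my_modEq_of_dvd hdvdeN hvadd
    have h2 : d₁.val + n' ≡ 1 + h' [MOD p ^ e - 1] := Nat.ModEq.add hd₁mod hn'h'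
    have hh'eq : h' = (p ^ e - 1) / 2 := by omega
    rw [← hh'eq]
    exact h1.trans h2
  exact ⟨d₁, d₂, hne, heq1, heq2, huniq, hd₁mod, hd₂mod⟩
end

section
/- Let p be an odd prime and m, k positive integers such that m/gcd(k,m) is odd. Let S denote the set of nonzero squares in F_{p^m}. Then the map x ↦ x^{p^k + 1} from F_{p^m}^* to F_{p^m}^* is exactly 2-to-1 onto S; that is, every element of S has exactly two preimages, and no nonsquare is in the image. -/
open scoped Classical

/-!
Modulo `g = gcd (p ^ k + 1) (p ^ m - 1)` we have `p ^ k = -1` and `p ^ m = 1`, so with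
`d = gcd k m` the power `p ^ (k * (m / d))` is both `(-1) ^ (m / d) = -1` and a power of `p ^ m`,
i.e. `1`; hence `g ∣ 2`, and `g = 2` since `p` is odd.
In a finite group `G`, Bézout for `n` and `|G|` shows that `x ↦ x ^ n` has the same fibres and the
same image as `x ↦ x ^ gcd n |G|`. For `F_q^*` and `n = p ^ k + 1` that exponent is `2`, and
`x ^ 2 = y ^ 2 ↔ x = ± y` with `y ≠ -y` in odd characteristic.
-/

theorem two_eq_zero_of_pow_eq_neg_one_of_pow_eq_one {R : Type*} [Ring R] {a : R} {k m : ℕ}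
    (hk : a ^ k = -1) (hm : a ^ m = 1) (hodd : Odd (m / Nat.gcd k m)) : (2 : R) = 0 := by
  have hlcm : k * (m / Nat.gcd k m) = m * (k / Nat.gcd k m) := by
    rw [← Nat.mul_div_assoc _ (Nat.gcd_dvd_right k m),
      ← Nat.mul_div_assoc _ (Nat.gcd_dvd_left k m), mul_comm]
  have h_neg : a ^ (k * (m / Nat.gcd k m)) = -1 := by rw [pow_mul, hk, hodd.neg_one_pow]
  have h_one : a ^ (k * (m / Nat.gcd k m)) = 1 := by rw [hlcm, pow_mul, hm, one_pow]
  rw [← one_add_one_eq_two, ← neg_eq_iff_add_eq_zero, ← h_neg, h_one]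

theorem Nat.gcd_pow_add_one_pow_sub_one_eq_two {p k m : ℕ} (hp : Odd p)
    (h : Odd (m / Nat.gcd k m)) : Nat.gcd (p ^ k + 1) (p ^ m - 1) = 2 := by
  set g := Nat.gcd (p ^ k + 1) (p ^ m - 1)
  apply Nat.dvd_antisymm
  · have hk : (p : ZMod g) ^ k = -1 := by
      have h0 : ((p ^ k + 1 : ℕ) : ZMod g) = 0 :=
        (ZMod.natCast_eq_zero_iff _ _).mpr (Nat.gcd_dvd_left _ _)
      push_cast at h0
      exact eq_neg_of_add_eq_zero_left h0
    have hm : (p : ZMod g) ^ m = 1 := by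
      have h0 : ((p ^ m - 1 : ℕ) : ZMod g) = 0 :=
        (ZMod.natCast_eq_zero_iff _ _).mpr (Nat.gcd_dvd_right _ _)
      rw [Nat.cast_sub (Nat.one_le_pow _ _ hp.pos)] at h0
      push_cast at h0
      exact sub_eq_zero.mp h0
    rw [← ZMod.natCast_eq_zero_iff]
    exact_mod_cast two_eq_zero_of_pow_eq_neg_one_of_pow_eq_one hk hm h
  · exact Nat.dvd_gcd hp.pow.add_one.two_dvd (Nat.Odd.sub_odd hp.pow odd_one).two_dvd

section FiniteGroup

variable {G : Type*} [Fintype G]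

theorem exists_pow_eq_pow_gcd_card [Group G] (n : ℕ) (x : G) :
    ∃ y : G, y ^ n = x ^ n.gcd (Fintype.card G) := by
  refine ⟨x ^ Nat.gcdA n (Fintype.card G), ?_⟩
  rw [← zpow_natCast, ← zpow_natCast x, Nat.gcd_eq_gcd_ab, zpow_add, mul_comm (n : ℤ),
    zpow_mul, zpow_mul, zpow_natCast x (Fintype.card G), pow_card_eq_one, one_zpow, mul_one]

theorem pow_eq_pow_iff_pow_gcd_card_eq [CommGroup G] (n : ℕ) (x y : G) :
    x ^ n = y ^ n ↔ x ^ n.gcd (Fintype.card G) = y ^ n.gcd (Fintype.card G) := by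
  rw [← div_eq_one, ← div_pow, ← div_eq_one (a := x ^ _), ← div_pow, pow_gcd_eq_one,
    pow_card_eq_one]
  exact (and_iff_left rfl).symm

end FiniteGroup

namespace FiniteField

variable {F : Type*} [Field F] [Fintype F]

theorem exists_ne_zero_pow_eq_pow_gcd {t : F} (ht : t ≠ 0) (n : ℕ) :
    ∃ x ≠ 0, x ^ n = t ^ n.gcd (Fintype.card F - 1) := by
  obtain ⟨y, hy⟩ := exists_pow_eq_pow_gcd_card n (Units.mk0 t ht)
  exact ⟨y, y.ne_zero, by simpa [Units.ext_iff, Fintype.card_units] using hy⟩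

theorem pow_eq_pow_iff_pow_gcd_eq {x y : F} (hx : x ≠ 0) (hy : y ≠ 0) (n : ℕ) :
    x ^ n = y ^ n ↔ x ^ n.gcd (Fintype.card F - 1) = y ^ n.gcd (Fintype.card F - 1) := by
  simpa [Units.ext_iff, Fintype.card_units] using
    pow_eq_pow_iff_pow_gcd_card_eq n (Units.mk0 x hx) (Units.mk0 y hy)

theorem ringChar_ne_two_of_two_dvd_card_sub_one (h : 2 ∣ Fintype.card F - 1) :
    ringChar F ≠ 2 := by
  have := Fintype.card_pos (α := F)
  rw [Ne, even_card_iff_char_two]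
  omega

theorem card_filter_pow_eq_of_gcd_eq_two {n : ℕ} (hn0 : n ≠ 0)
    (hn : n.gcd (Fintype.card F - 1) = 2) {s : F} (hs : s ≠ 0) :
    (Finset.univ.filter (fun x : F => x ^ n = s)).card = if IsSquare s then 2 else 0 := by
  split_ifs with hsq
  · obtain ⟨t, rfl⟩ := hsq
    have ht : t ≠ 0 := by rintro rfl; simp at hs
    obtain ⟨x₀, hx₀, hx₀n⟩ := exists_ne_zero_pow_eq_pow_gcd ht n
    rw [hn, sq] at hx₀n
    have hfibre : Finset.univ.filter (fun x : F => x ^ n = t * t) = {x₀, -x₀} := by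
      ext x
      simp only [Finset.mem_filter, Finset.mem_univ, true_and, Finset.mem_insert,
        Finset.mem_singleton, ← hx₀n]
      by_cases hx : x = 0
      · subst hx
        simp [zero_pow hn0, hx₀, eq_comm (a := (0 : F))]
      · rw [pow_eq_pow_iff_pow_gcd_eq hx hx₀, hn, sq_eq_sq_iff_eq_or_eq_neg]
    have hchar := ringChar_ne_two_of_two_dvd_card_sub_one (hn ▸ Nat.gcd_dvd_right n _)
    rw [hfibre, Finset.card_pair_eq_two_iff]
    exact fun h => hx₀ ((Ring.eq_self_iff_eq_zero_of_char_ne_two hchar).mp h.symm)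
  · rw [Finset.card_eq_zero, Finset.filter_eq_empty_iff]
    rintro x - rfl
    exact hsq ((even_iff_two_dvd.mpr (hn ▸ Nat.gcd_dvd_left n _)).isSquare_pow x)

end FiniteField

theorem power_map_two_to_one_onto_squares_general (p m k : ℕ) (hodd : Odd p)
    (h : Odd (m / Nat.gcd k m))
    (F : Type*) [Field F] [Fintype F] (hcard : Fintype.card F = p ^ m)
    (s : F) (hs : s ≠ 0) :
    (Finset.univ.filter (fun x : F => x ^ (p ^ k + 1) = s)).card
      = if IsSquare s then 2 else 0 := by
  have hgcd := Nat.gcd_pow_add_one_pow_sub_one_eq_two (k := k) hodd h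
  rw [← hcard] at hgcd
  exact FiniteField.card_filter_pow_eq_of_gcd_eq_two (Nat.succ_ne_zero _) hgcd hs

theorem power_map_two_to_one_onto_squares (p m k : ℕ) (hp : p.Prime) (hodd : Odd p)
    (hm : 0 < m) (hk : 0 < k) (h : Odd (m / Nat.gcd k m))
    (F : Type*) [Field F] [Fintype F] (hcard : Fintype.card F = p ^ m)
    (s : F) (hs : s ≠ 0) :
    (Finset.univ.filter (fun x : F => x ^ (p ^ k + 1) = s)).card
      = if IsSquare s then 2 else 0 :=
  power_map_two_to_one_onto_squares_general p m k hodd h F hcard s hs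
end

section
/- Let p be an odd prime, m and k positive integers with m/gcd(k,m) odd. For any u ∈ F_{p^m}, the exponential sums ∑_{x ∈ F_{p^m}} ω_p^{Tr(u x^{p^k+1})} and ∑_{x ∈ F_{p^m}} ω_p^{Tr(u x^2)} are equal. -/
noncomputable def ePow (p : ℕ) (a : ZMod p) : ℂ :=
  Complex.exp (2 * Real.pi * Complex.I * (a.val : ℂ) / (p : ℂ))

/-!
Write `q = p ^ m`. Since `m / gcd(k, m)` is odd, `gcd(2k, m) = gcd(k, m)`, and from
`gcd(p^a - 1, p^b - 1) = p^gcd(a, b) - 1` one gets `gcd(p^k + 1, q - 1) = 2 = gcd(2, q - 1)`.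
Two exponents with the same gcd with `q - 1` differ by a factor `t` prime to `q - 1` modulo
`q - 1`, so `x ^ (p^k + 1) = (x ^ t) ^ 2` on `𝔽_q` with `x ↦ x ^ t` a permutation; reindexing
the sum by this permutation gives the identity for any summand.
-/

namespace Nat

theorem gcd_two_mul_left_of_odd_div_gcd {k m : ℕ} (h : Odd (m / gcd k m)) :
    gcd (2 * k) m = gcd k m := by
  set d := gcd k m
  have hk : d * (k / d) = k := Nat.mul_div_cancel' (gcd_dvd_left k m)
  have hm : d * (m / d) = m := Nat.mul_div_cancel' (gcd_dvd_right k m)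
  calc gcd (2 * k) m = d * gcd (2 * (k / d)) (m / d) := by
        rw [← gcd_mul_left, mul_left_comm, hk, hm]
    _ = d * gcd (k / d) (m / d) := by
        rw [Coprime.gcd_mul_left_cancel _ (coprime_two_left.mpr h)]
    _ = d := by rw [← gcd_mul_left, hk, hm]

theorem gcd_pow_add_one_pow_sub_one_dvd_two (a : ℕ) {k m : ℕ} (h : Odd (m / gcd k m)) :
    gcd (a ^ k + 1) (a ^ m - 1) ∣ 2 := by
  set g := gcd (a ^ k + 1) (a ^ m - 1)
  have h2k : g ∣ a ^ (2 * k) - 1 := by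
    rw [mul_comm, pow_mul, ← one_pow 2, Nat.sq_sub_sq]
    exact (gcd_dvd_left _ _).mul_right _
  have hgcd : g ∣ a ^ gcd k m - 1 := by
    rw [← gcd_two_mul_left_of_odd_div_gcd h, ← pow_sub_one_gcd_pow_sub_one]
    exact dvd_gcd h2k (gcd_dvd_right _ _)
  have hk : g ∣ a ^ k - 1 := hgcd.trans (pow_sub_one_dvd_pow_sub_one a (gcd_dvd_left k m))
  refine (Nat.dvd_sub (gcd_dvd_left _ _) hk).trans ?_
  rcases Nat.eq_zero_or_pos (a ^ k) with h0 | hpos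
  · simp [h0]
  · rw [show a ^ k + 1 - (a ^ k - 1) = 2 by omega]

theorem _root_.Odd.gcd_pow_add_one_pow_sub_one {p : ℕ} (hp : Odd p) {k m : ℕ}
    (h : Odd (m / gcd k m)) : gcd (p ^ k + 1) (p ^ m - 1) = 2 :=
  dvd_antisymm (gcd_pow_add_one_pow_sub_one_dvd_two p h)
    (dvd_gcd hp.pow.add_one.two_dvd (Nat.Odd.sub_odd hp.pow odd_one).two_dvd)

theorem exists_coprime_modEq_mul_of_gcd_eq {a b n : ℕ} (hn : n ≠ 0) (h : gcd a n = gcd b n) :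
    ∃ t, 0 < t ∧ Coprime t n ∧ a ≡ b * t [MOD n] := by
  set d := gcd a n
  have hd : 0 < d := gcd_pos_of_pos_right a (pos_of_ne_zero hn)
  have ha : d * (a / d) = a := Nat.mul_div_cancel' (gcd_dvd_left a n)
  have hb : d * (b / d) = b := Nat.mul_div_cancel' (h ▸ gcd_dvd_left b n)
  have hn' : d * (n / d) = n := Nat.mul_div_cancel' (gcd_dvd_right a n)
  have ha' : Coprime (a / d) (n / d) := coprime_div_gcd_div_gcd hd
  have hb' : Coprime (b / d) (n / d) := h ▸ coprime_div_gcd_div_gcd (h ▸ hd)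
  have : NeZero n := ⟨hn⟩
  -- `a / d` and `b / d` are units modulo `n / d`; lift their quotient to a unit modulo `n`.
  obtain ⟨s, hs⟩ := ZMod.unitsMap_surjective (Dvd.intro_left d hn')
    ((ZMod.unitOfCoprime _ hb')⁻¹ * ZMod.unitOfCoprime _ ha')
  -- `+ n` keeps `t` positive: for `n = 1` the value `(s : ZMod n).val` is `0`.
  set t := (s : ZMod n).val + n
  have ht : (t : ZMod (n / d)) = ZMod.unitsMap (Dvd.intro_left d hn') s := by
    rw [Nat.cast_add, (ZMod.natCast_eq_zero_iff n _).mpr (Dvd.intro_left d hn'), add_zero,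
      ZMod.unitsMap_val, ZMod.cast_eq_val]
  have key : a / d ≡ b / d * t [MOD n / d] := by
    rw [← ZMod.natCast_eq_natCast_iff, Nat.cast_mul, ht, hs, ← ZMod.coe_unitOfCoprime _ hb',
      ← ZMod.coe_unitOfCoprime _ ha', Units.val_mul, Units.mul_inv_cancel_left]
  refine ⟨t, by omega, coprime_add_self_left.mpr (ZMod.val_coe_unit_coprime s), ?_⟩
  simpa only [hn', ← mul_assoc, ha, hb] using key.mul_left' d

end Nat

namespace FiniteField

variable {F : Type*} [Field F] [Fintype F]

theorem pow_eq_pow_of_modEq {a b : ℕ} (ha : a ≠ 0) (hb : b ≠ 0)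
    (h : a ≡ b [MOD Fintype.card F - 1]) (x : F) : x ^ a = x ^ b := by
  rcases eq_or_ne x 0 with rfl | hx
  · rw [zero_pow ha, zero_pow hb]
  · exact _root_.pow_eq_pow_of_modEq h (pow_card_sub_one_eq_one x hx)

theorem pow_bijective_of_coprime {t : ℕ} (ht : t ≠ 0) (h : t.Coprime (Fintype.card F - 1)) :
    Function.Bijective fun x : F ↦ x ^ t := by
  have hunits : (Nat.card Fˣ).Coprime t := by
    rwa [Nat.card_units, Nat.card_eq_fintype_card, Nat.coprime_comm]
  rw [← Finite.injective_iff_bijective]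
  intro x y hxy
  simp only at hxy
  rcases eq_or_ne x 0 with rfl | hx
  · exact ((pow_eq_zero_iff ht).mp (hxy.symm.trans (zero_pow ht))).symm
  rcases eq_or_ne y 0 with rfl | hy
  · exact (pow_eq_zero_iff ht).mp (hxy.trans (zero_pow ht))
  have := hunits.pow_left_bijective.injective (a₁ := Units.mk0 x hx) (a₂ := Units.mk0 y hy)
    (Units.ext (by simpa using hxy))
  simpa using congrArg Units.val this

theorem sum_pow_eq_sum_pow_of_gcd_eq {M : Type*} [AddCommMonoid M] (f : F → M) {a b : ℕ}
    (ha : a ≠ 0) (hb : b ≠ 0)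
    (h : a.gcd (Fintype.card F - 1) = b.gcd (Fintype.card F - 1)) :
    ∑ x : F, f (x ^ a) = ∑ x : F, f (x ^ b) := by
  have hq : Fintype.card F - 1 ≠ 0 := by have := Fintype.one_lt_card (α := F); omega
  obtain ⟨t, ht, hcop, hmod⟩ := Nat.exists_coprime_modEq_mul_of_gcd_eq hq h
  calc ∑ x : F, f (x ^ a) = ∑ x : F, f ((x ^ t) ^ b) := by
        simp_rw [← pow_mul, mul_comm t b, pow_eq_pow_of_modEq ha (by positivity) hmod]
    _ = ∑ x : F, f (x ^ b) :=
        Fintype.sum_bijective _ (pow_bijective_of_coprime ht.ne' hcop) _ _ fun _ ↦ rfl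

end FiniteField

theorem exp_sum_power_eq_exp_sum_square_general (p m k : ℕ) (hodd : Odd p)
    (h : Odd (m / Nat.gcd k m))
    (F : Type*) [Field F] [Fintype F] [Algebra (ZMod p) F]
    (hcard : Fintype.card F = p ^ m) (u : F) :
    ∑ x : F, ePow p (Algebra.trace (ZMod p) F (u * x ^ (p ^ k + 1)))
      = ∑ x : F, ePow p (Algebra.trace (ZMod p) F (u * x ^ 2)) := by
  have hgcd : (p ^ k + 1).gcd (Fintype.card F - 1) = Nat.gcd 2 (Fintype.card F - 1) := by
    rw [hcard, hodd.gcd_pow_add_one_pow_sub_one h,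
      Nat.gcd_eq_left (Nat.Odd.sub_odd hodd.pow odd_one).two_dvd]
  exact FiniteField.sum_pow_eq_sum_pow_of_gcd_eq
    (fun y ↦ ePow p (Algebra.trace (ZMod p) F (u * y))) (by positivity) two_ne_zero hgcd

theorem exp_sum_power_eq_exp_sum_square (p m k : ℕ) (hp : p.Prime) (hodd : Odd p)
    (hm : 0 < m) (hk : 0 < k) (h : Odd (m / Nat.gcd k m))
    (F : Type*) [Field F] [Fintype F] [Algebra (ZMod p) F]
    (hcard : Fintype.card F = p ^ m) (u : F) :
    ∑ x : F, ePow p (Algebra.trace (ZMod p) F (u * x ^ (p ^ k + 1)))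
      = ∑ x : F, ePow p (Algebra.trace (ZMod p) F (u * x ^ 2)) :=
  exp_sum_power_eq_exp_sum_square_general p m k hodd h F hcard u
end

section
/- Let p be an odd prime, m, k positive integers with e = gcd(k,m) and m/e ≥ 3 odd, and let d satisfy d(p^k+1) ≡ 2 (mod p^m - 1) and d ≡ 1 (mod p^e - 1). Then for every a ∈ F_p, the number of x ∈ F_{p^m} with Tr(x^d) = a equals p^{m-1}. -/
open scoped Classical

theorem count_trace_of_power_d_one_mod (p m k : ℕ) (hp : p.Prime) (hodd : Odd p)
    (hk : 0 < k) (e : ℕ) (he : e = Nat.gcd k m) (hge : 3 ≤ m / e) (hoddq : Odd (m / e))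
    (d : ℕ) (hd : 0 < d) (hcong : d * (p ^ k + 1) ≡ 2 [MOD p ^ m - 1])
    (hd1 : d ≡ 1 [MOD p ^ e - 1])
    (F : Type*) [Field F] [Fintype F] [Algebra (ZMod p) F]
    (hcard : Fintype.card F = p ^ m) (a : ZMod p) :
    (Finset.univ.filter (fun x : F => Algebra.trace (ZMod p) F (x ^ d) = a)).card
      = p ^ (m - 1) := by
  haveI : Fact p.Prime := ⟨hp⟩
  haveI : Module.Finite (ZMod p) F := Module.Finite.of_finite
  have hm : 0 < m := by
    rcases Nat.eq_zero_or_pos m with h | h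
    · subst h; simp at hge
    · exact h
  have he1 : 0 < e := Nat.pos_of_dvd_of_pos (he ▸ Nat.gcd_dvd_left k m) hk
  -- d is odd
  have hpe2 : 2 ∣ p ^ e - 1 := by
    have hodd' : Odd (p ^ e) := hodd.pow
    have h1 : 1 ≤ p ^ e := Nat.one_le_pow _ _ hp.pos
    rcases hodd' with ⟨t, ht⟩
    exact ⟨t, by omega⟩
  have hdodd : Odd d := by
    have := (Nat.modEq_iff_dvd' (by omega : 1 ≤ d)).mp hd1.symm
    rcases (dvd_trans hpe2 this) with ⟨t, ht⟩
    exact ⟨t, by omega⟩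
  -- gcd(d, p^m - 1) = 1
  have hq1 : 1 < p ^ m := Nat.one_lt_pow hm.ne' hp.one_lt
  set n : ℕ := p ^ m - 1 with hn
  have hgcd : Nat.Coprime d n := by
    set g : ℕ := Nat.gcd d n with hg
    have hgd : g ∣ d := Nat.gcd_dvd_left d n
    have hgn : g ∣ n := Nat.gcd_dvd_right d n
    have h2 : (g : ℤ) ∣ 2 := by
      have hdvd : (n : ℤ) ∣ (2 : ℤ) - (d * (p ^ k + 1) : ℕ) := Nat.ModEq.dvd hcong
      have h1 : (g : ℤ) ∣ (2 : ℤ) - (d * (p ^ k + 1) : ℕ) :=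
        dvd_trans (Int.natCast_dvd_natCast.mpr hgn) hdvd
      have h2 : (g : ℤ) ∣ ((d * (p ^ k + 1) : ℕ) : ℤ) :=
        Int.natCast_dvd_natCast.mpr (hgd.mul_right _)
      simpa using dvd_add h1 h2
    have h2' : g ∣ 2 := Int.ofNat_dvd.mp (by exact_mod_cast h2)
    have hgodd : Odd g := hdodd.of_dvd_nat hgd
    rcases (Nat.dvd_prime Nat.prime_two).mp h2' with h | h
    · exact h
    · rw [h] at hgodd; exact absurd hgodd (by decide)
  -- x ↦ x ^ d is injective on F
  have hinj : Function.Injective (fun x : F => x ^ d) := by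
    intro x y hxy
    simp only at hxy
    rcases eq_or_ne y 0 with rfl | hy
    · rw [zero_pow hd.ne'] at hxy
      exact pow_eq_zero_iff hd.ne' |>.mp hxy
    · have hx : x ≠ 0 := by
        intro h; rw [h, zero_pow hd.ne'] at hxy
        exact hy ((pow_eq_zero_iff hd.ne').mp hxy.symm)
      have hz : (x / y) ^ d = 1 := by
        rw [div_pow, hxy, div_self (pow_ne_zero _ hy)]
      have hzn : (x / y) ^ n = 1 := by
        rw [hn, ← hcard]
        exact FiniteField.pow_card_sub_one_eq_one _ (div_ne_zero hx hy)
      have h1 : orderOf (x / y) ∣ d := orderOf_dvd_of_pow_eq_one hz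
      have h2 : orderOf (x / y) ∣ n := orderOf_dvd_of_pow_eq_one hzn
      have : orderOf (x / y) = 1 :=
        Nat.eq_one_of_dvd_coprimes hgcd h1 h2
      have : x / y = 1 := orderOf_eq_one_iff.mp this
      field_simp at this
      exact this
  -- reduce to counting fibers of the trace
  have hcount : (Finset.univ.filter (fun x : F => Algebra.trace (ZMod p) F (x ^ d) = a)).card
      = (Finset.univ.filter (fun y : F => Algebra.trace (ZMod p) F y = a)).card := by
    apply Finset.card_bij (fun x _ => x ^ d)
    · intro x hx
      simp only [Finset.mem_filter, Finset.mem_univ, true_and] at hx ⊢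
      exact hx
    · intro x hx y hy hxy
      exact hinj hxy
    · intro y hy
      obtain ⟨x, hx⟩ := Finite.surjective_of_injective hinj y
      have hx' : x ^ d = y := hx
      refine ⟨x, ?_, hx'⟩
      simp only [Finset.mem_filter, Finset.mem_univ, true_and] at hy ⊢
      rw [hx']; exact hy
  rw [hcount]
  -- trace is surjective
  have hsurj : Function.Surjective (Algebra.trace (ZMod p) F) :=
    Algebra.trace_surjective (ZMod p) F
  -- fibers of an additive hom that is surjective all have equal size
  set f : F →+ ZMod p := (Algebra.trace (ZMod p) F).toAddMonoidHom with hf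
  have hfa : ∀ x : F, f x = Algebra.trace (ZMod p) F x := fun x => rfl
  have hfib : ∀ b : ZMod p,
      (Finset.univ.filter (fun y : F => f y = b)).card
        = (Finset.univ.filter (fun y : F => f y = a)).card := by
    intro b
    exact AddMonoidHom.card_fiber_eq_of_mem_range f ⟨_, (hsurj b).choose_spec⟩
      ⟨_, (hsurj a).choose_spec⟩
  have hsum : ∑ b : ZMod p, (Finset.univ.filter (fun y : F => f y = b)).card
      = Fintype.card F := by
    rw [← Finset.card_univ]
    exact (Finset.card_eq_sum_card_fiberwise (fun x _ => Finset.mem_univ (f x))).symm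
  rw [Finset.sum_congr rfl (fun b _ => hfib b)] at hsum
  simp only [Finset.sum_const, Finset.card_univ, ZMod.card, smul_eq_mul] at hsum
  have hpm : p * p ^ (m - 1) = p ^ m := by
    rw [← pow_succ']
    congr 1
    omega
  have : p * (Finset.univ.filter (fun y : F => f y = a)).card = p * p ^ (m - 1) := by
    rw [hsum, hcard, hpm]
  have hfinal := Nat.eq_of_mul_eq_mul_left hp.pos this
  simpa only [hfa] using hfinal
end

section
/- Let p be an odd prime, m, k positive integers with e = gcd(k,m) and m/e ≥ 3 odd, p^e ≡ 1 (mod 4), and let d satisfy d(p^k+1) ≡ 2 (mod p^m - 1) and d ≡ 1 + (p^e−1)/2 (mod p^e − 1). Then for every a ∈ F_p, the number of x ∈ F_{p^m} with Tr(x^d) = a equals p^{m-1}. -/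
open scoped Classical

theorem count_trace_of_power_d_half_mod_one_case (p m k : ℕ) (hp : p.Prime) (hodd : Odd p)
    (hk : 0 < k) (e : ℕ) (he : e = Nat.gcd k m) (hge : 3 ≤ m / e) (hoddq : Odd (m / e))
    (hpe : p ^ e % 4 = 1)
    (d : ℕ) (hd : 0 < d) (hcong : d * (p ^ k + 1) ≡ 2 [MOD p ^ m - 1])
    (hd1 : d ≡ 1 + (p ^ e - 1) / 2 [MOD p ^ e - 1])
    (F : Type*) [Field F] [Fintype F] [Algebra (ZMod p) F]
    (hcard : Fintype.card F = p ^ m) (a : ZMod p) :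
    (Finset.univ.filter (fun x : F => Algebra.trace (ZMod p) F (x ^ d) = a)).card
      = p ^ (m - 1) := by
  classical
  haveI : Fact p.Prime := ⟨hp⟩
  have hp1 : 1 < p := hp.one_lt
  have hepos : 0 < e := he ▸ Nat.gcd_pos_of_pos_left m hk
  have h3e : 3 * e ≤ m := (Nat.le_div_iff_mul_le hepos).mp hge
  have hm : 0 < m := by omega
  -- 4 divides p^e - 1
  have h4 : 4 ∣ p ^ e - 1 := by
    have h1 : 1 ≤ p ^ e := Nat.one_le_pow _ _ (by omega)
    have := Nat.div_add_mod (p ^ e) 4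
    omega
  obtain ⟨t, ht⟩ := h4
  -- d is odd
  have hdodd : Odd d := by
    have h2dvd : 2 ∣ p ^ e - 1 := ht ▸ ⟨2 * t, by ring⟩
    have hmod2 : d ≡ 1 + (p ^ e - 1) / 2 [MOD 2] := hd1.of_dvd h2dvd
    have hhalf : (p ^ e - 1) / 2 = 2 * t := by
      rw [ht, show (4 : ℕ) * t = 2 * t * 2 by ring, Nat.mul_div_cancel _ two_pos]
    rw [hhalf] at hmod2
    have : d % 2 = (1 + 2 * t) % 2 := hmod2
    rw [Nat.odd_iff]
    omega
  -- d is coprime to p^m - 1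
  have hcop : Nat.Coprime d (p ^ m - 1) := by
    have hg2 : (Nat.gcd d (p ^ m - 1) : ℤ) ∣ 2 := by
      have h1 : ((Nat.gcd d (p ^ m - 1) : ℤ)) ∣ ((2 : ℤ) - (d : ℤ) * ((p : ℤ) ^ k + 1)) := by
        refine dvd_trans (Int.natCast_dvd_natCast.mpr (Nat.gcd_dvd_right _ _)) ?_
        have := hcong.dvd
        push_cast at this ⊢
        convert this using 2 <;> push_cast <;> ring
      have h2 : (Nat.gcd d (p ^ m - 1) : ℤ) ∣ (d : ℤ) * ((p : ℤ) ^ k + 1) :=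
        Dvd.dvd.mul_right (Int.natCast_dvd_natCast.mpr (Nat.gcd_dvd_left _ _)) _
      have := dvd_add h1 h2
      simpa using this
    have hgdvd2 : Nat.gcd d (p ^ m - 1) ∣ 2 := by exact_mod_cast hg2
    rcases (Nat.dvd_prime Nat.prime_two).mp hgdvd2 with h | h
    · exact h
    · exfalso
      have : 2 ∣ d := h ▸ Nat.gcd_dvd_left _ _
      rw [Nat.odd_iff] at hdodd
      omega
  -- the power map x ↦ x^d is bijective on F
  have hcardU : Nat.card Fˣ = p ^ m - 1 := by
    rw [Nat.card_eq_fintype_card, Fintype.card_units, hcard]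
  have hcop' : (Nat.card Fˣ).Coprime d := by rw [hcardU]; exact hcop.symm
  have hbij : Function.Bijective (fun x : F => x ^ d) := by
    refine Finite.injective_iff_bijective.mp ?_
    intro x y hxy
    dsimp only at hxy
    rcases eq_or_ne x 0 with rfl | hx
    · exact ((pow_eq_zero_iff hd.ne').mp (by simpa [zero_pow hd.ne'] using hxy.symm)).symm
    rcases eq_or_ne y 0 with rfl | hy
    · exact (pow_eq_zero_iff hd.ne').mp (by simpa [zero_pow hd.ne'] using hxy)
    · have hu : (Units.mk0 x hx) ^ d = (Units.mk0 y hy) ^ d := Units.ext (by simpa using hxy)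
      have h2 : Units.mk0 x hx = Units.mk0 y hy :=
        (powCoprime hcop').injective (by simpa [powCoprime_apply] using hu)
      simpa using congrArg Units.val h2
  -- trace surjectivity
  haveI : Module.Finite (ZMod p) F := Module.Finite.of_finite
  have hsurj : Function.Surjective (Algebra.trace (ZMod p) F) :=
    Algebra.trace_surjective (ZMod p) F
  set T := Algebra.trace (ZMod p) F with hT
  -- step 1: reduce to counting Tr x = a
  have step1 : (Finset.univ.filter (fun x : F => T (x ^ d) = a)).card
      = (Finset.univ.filter (fun x : F => T x = a)).card := by
    refine Finset.card_bij (fun x _ => x ^ d) ?_ ?_ ?_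
    · intro x hx
      simp only [Finset.mem_filter, Finset.mem_univ, true_and] at hx ⊢
      exact hx
    · intro x hx y hy hxy
      exact hbij.injective hxy
    · intro y hy
      obtain ⟨x, hx⟩ := hbij.surjective y
      refine ⟨x, ?_, hx⟩
      simp only [Finset.mem_filter, Finset.mem_univ, true_and] at hy ⊢
      have hx' : x ^ d = y := hx
      rw [hx']
      exact hy
  -- all fibers of T have equal cardinality
  have hfib : ∀ b : ZMod p, (Finset.univ.filter (fun x : F => T x = b)).card
      = (Finset.univ.filter (fun x : F => T x = a)).card := by
    intro b
    obtain ⟨z, hz⟩ := hsurj (a - b)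
    refine Finset.card_bij' (fun x _ => x + z) (fun y _ => y - z) ?_ ?_ ?_ ?_
    · intro x hx
      simp only [Finset.mem_filter, Finset.mem_univ, true_and] at hx ⊢
      rw [map_add, hx, hz]
      ring
    · intro y hy
      simp only [Finset.mem_filter, Finset.mem_univ, true_and] at hy ⊢
      rw [map_sub, hy, hz]
      ring
    · intro x hx; ring
    · intro y hy; ring
  -- sum of fibers
  have hsum : (Finset.univ : Finset F).card
      = ∑ b : ZMod p, (Finset.univ.filter (fun x : F => T x = b)).card :=
    Finset.card_eq_sum_card_fiberwise (fun x _ => Finset.mem_univ _)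
  rw [Finset.sum_congr rfl (fun b _ => hfib b)] at hsum
  simp only [Finset.sum_const, Finset.card_univ, ZMod.card, smul_eq_mul, hcard] at hsum
  have hpm : p ^ m = p * p ^ (m - 1) := by
    rw [← pow_succ']
    congr 1
    omega
  rw [hpm] at hsum
  have hc := Nat.eq_of_mul_eq_mul_left (by omega : 0 < p) hsum.symm
  rw [step1, ← hc]
end

section
/- Let p be an odd prime, m, k positive integers with m/gcd(k,m) ≥ 3 odd, and write e = gcd(k,m), h = m/e, q = p^e. For (u,v) ∈ F_{p^m}² \ {(0,0)}, consider the quadratic form Q_{u,v}(x) = Tr^m_e(u x^{p^k+1} + v x²) over F_q. Then the rank of Q_{u,v} is h, h−1, or h−2; in particular Q_{u,0} (u ≠ 0) and Q_{0,v} (v ≠ 0) both have rank h. -/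
/-- The relative trace `Tr^m_e` from `F_{p^m}` to `F_{p^e}` (with `h = m/e`),
computed inside the big field: `x ↦ ∑_{i<h} x^{p^{e i}}`. -/
noncomputable def relTrace (p e h : ℕ) {F : Type*} [Field F] (x : F) : F :=
  ∑ i ∈ Finset.range h, x ^ p ^ (e * i)

/-!
Let `σ x = x ^ p ^ k`. Since `gcd(k, m) = e`, the fixed field of `σ` is `F_q`, and the relative
trace is the field trace of `F / F_q`; it is nondegenerate and `σ`-invariant. As `Q` is homogeneous
of degree two over `F_q`, its radical is an `F_q`-subspace. Polarizing and moving `σ` across the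
trace shows that every `z` in the radical solves the second-order `σ`-linear equation
`σ(u) σ²(z) + σ(2v) σ(z) + u z = 0`.

Two solutions `z, w` have a `σ`-Wronskian `z σ(w) - w σ(z)` that solves a first-order equation, so
the quotient of two Wronskians is `σ`-fixed; Cramer's rule then writes every solution as an
`F_q`-combination of two given ones, and the radical has dimension at most two. When `v = 0`,
`s = u z σ(z)` satisfies `σ(s) = -s`, which forces `s = 0` because `σ` has odd order `h`; when
`u = 0` the equation is `σ(2 v z) = 0`.
-/

open Module

section Semilinear

variable {F : Type*} [Field F] (σ : F →+* F)

abbrev fixedSubfield : Subfield F := σ.eqLocusField (RingHom.id F)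

def semilinearKer (a b c : F) : Submodule (fixedSubfield σ) F where
  carrier := {z | a * σ (σ z) + b * σ z + c * z = 0}
  add_mem' {z w} hz hw := by
    simp only [Set.mem_ofPred_eq, map_add] at *
    linear_combination hz + hw
  zero_mem' := by simp
  smul_mem' t z hz := by
    have ht : σ t = t := t.2
    simp only [Set.mem_ofPred_eq, Subfield.smul_def, smul_eq_mul, map_mul, ht] at *
    linear_combination (t : F) * hz

def semilinearWronskian (z w : F) : F := z * σ w - w * σ z

variable {σ}

theorem map_div_eq_div_of_semilinearWronskian_eq_zero {x y : F}
    (h : semilinearWronskian σ x y = 0) : σ (x / y) = x / y := by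
  rcases eq_or_ne y 0 with rfl | hy
  · simp
  rw [map_div₀, div_eq_div_iff ((map_ne_zero σ).mpr hy) hy]
  unfold semilinearWronskian at h
  linear_combination -h

variable {a b c : F}

theorem mul_map_semilinearWronskian {z w : F} (hz : z ∈ semilinearKer σ a b c)
    (hw : w ∈ semilinearKer σ a b c) :
    a * σ (semilinearWronskian σ z w) = c * semilinearWronskian σ z w := by
  change a * σ (σ z) + b * σ z + c * z = 0 at hz
  change a * σ (σ w) + b * σ w + c * w = 0 at hw
  simp only [semilinearWronskian, map_sub, map_mul]
  linear_combination σ z * hw - σ w * hz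

theorem map_div_eq_div_of_mul_map_eq (ha : a ≠ 0) {x y : F} (hx : a * σ x = c * x)
    (hy : a * σ y = c * y) : σ (x / y) = x / y := by
  refine map_div_eq_div_of_semilinearWronskian_eq_zero (mul_left_cancel₀ ha ?_)
  unfold semilinearWronskian
  linear_combination x * hy - y * hx

theorem mem_span_pair_of_semilinearWronskian_ne_zero (ha : a ≠ 0) {z₁ z₂ z : F}
    (hz₁ : z₁ ∈ semilinearKer σ a b c) (hz₂ : z₂ ∈ semilinearKer σ a b c)
    (hz : z ∈ semilinearKer σ a b c) (hW : semilinearWronskian σ z₁ z₂ ≠ 0) :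
    z ∈ Submodule.span (fixedSubfield σ) {z₁, z₂} := by
  have hW₁₂ := mul_map_semilinearWronskian hz₁ hz₂
  refine Submodule.mem_span_pair.mpr
    ⟨⟨_, map_div_eq_div_of_mul_map_eq ha (mul_map_semilinearWronskian hz hz₂) hW₁₂⟩,
      ⟨_, map_div_eq_div_of_mul_map_eq ha (mul_map_semilinearWronskian hz₁ hz) hW₁₂⟩, ?_⟩
  simp only [Subfield.smul_def, smul_eq_mul]
  field_simp
  unfold semilinearWronskian
  ring

theorem mem_span_singleton_of_semilinearWronskian_eq_zero {y z : F} (hy : y ≠ 0)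
    (hW : semilinearWronskian σ z y = 0) : z ∈ Submodule.span (fixedSubfield σ) {y} :=
  Submodule.mem_span_singleton.mpr
    ⟨⟨z / y, map_div_eq_div_of_semilinearWronskian_eq_zero hW⟩, by
      simp only [Subfield.smul_def, smul_eq_mul]
      field_simp⟩

theorem exists_semilinearKer_le_span_pair (ha : a ≠ 0) :
    ∃ z₁ z₂ : F, semilinearKer σ a b c ≤ Submodule.span (fixedSubfield σ) {z₁, z₂} := by
  by_cases hW : ∃ z₁ ∈ semilinearKer σ a b c, ∃ z₂ ∈ semilinearKer σ a b c,
      semilinearWronskian σ z₁ z₂ ≠ 0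
  · obtain ⟨z₁, hz₁, z₂, hz₂, hW⟩ := hW
    exact ⟨z₁, z₂, fun z hz => mem_span_pair_of_semilinearWronskian_ne_zero ha hz₁ hz₂ hz hW⟩
  push Not at hW
  by_cases hne : ∃ y ∈ semilinearKer σ a b c, y ≠ 0
  · obtain ⟨y, hy, hy0⟩ := hne
    refine ⟨y, y, fun z hz => ?_⟩
    rw [Set.pair_eq_singleton]
    exact mem_span_singleton_of_semilinearWronskian_eq_zero hy0 (hW z hz y hy)
  push Not at hne
  exact ⟨0, 0, fun z hz => (hne z hz).symm ▸ Submodule.zero_mem _⟩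

theorem finrank_semilinearKer_le_two (ha : a ≠ 0) :
    finrank (fixedSubfield σ) (semilinearKer σ a b c) ≤ 2 := by
  classical
  obtain ⟨z₁, z₂, hle⟩ := exists_semilinearKer_le_span_pair (b := b) ha
  have := FiniteDimensional.span_of_finite (fixedSubfield σ) (Set.toFinite {z₁, z₂})
  calc finrank (fixedSubfield σ) (semilinearKer σ a b c)
      ≤ finrank (fixedSubfield σ) (Submodule.span (fixedSubfield σ) {z₁, z₂}) :=
        Submodule.finrank_mono hle
    _ ≤ ({z₁, z₂} : Set F).toFinset.card := finrank_span_le_card _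
    _ ≤ 2 := by simpa using Finset.card_le_two

theorem trace_fixedSubfield_map [FiniteDimensional (fixedSubfield σ) F]
    (hσ : Function.Bijective σ) (y : F) :
    Algebra.trace (fixedSubfield σ) F (σ y) = Algebra.trace (fixedSubfield σ) F y :=
  Algebra.trace_eq_of_algEquiv (AlgEquiv.ofBijective ⟨σ, fun t => t.2⟩ hσ) y

theorem eq_zero_of_map_eq_neg {n : ℕ} (hσn : ∀ x, σ^[n] x = x) (hn : Odd n) (h2 : (2 : F) ≠ 0)
    {s : F} (hs : σ s = -s) : s = 0 := by
  have hiter : ∀ j, σ^[j] s = (-1) ^ j * s := by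
    intro j
    induction j with
    | zero => simp
    | succ j ih =>
      rw [Function.iterate_succ_apply', ih, map_mul, map_pow, map_neg, map_one, hs]
      ring
  have hss : s = -s := by rw [← neg_one_mul, ← hn.neg_one_pow, ← hiter, hσn]
  exact (mul_eq_zero.mp (by linear_combination hss : (2 : F) * s = 0)).resolve_left h2

theorem semilinearKer_eq_bot_of_odd {n : ℕ} (hσn : ∀ x, σ^[n] x = x) (hn : Odd n)
    (h2 : (2 : F) ≠ 0) (hc : c ≠ 0) : semilinearKer σ (σ c) 0 c = ⊥ := by
  refine (Submodule.eq_bot_iff _).mpr fun z hz => ?_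
  change σ c * σ (σ z) + 0 * σ z + c * z = 0 at hz
  have hs : c * z * σ z = 0 := eq_zero_of_map_eq_neg hσn hn h2 <| by
    simp only [map_mul]
    linear_combination σ z * hz
  simpa [hc] using hs

theorem semilinearKer_zero_zero_eq_bot (hb : b ≠ 0) : semilinearKer σ 0 b 0 = ⊥ := by
  refine (Submodule.eq_bot_iff _).mpr fun z hz => ?_
  change 0 * σ (σ z) + b * σ z + 0 * z = 0 at hz
  simpa [hb] using hz

end Semilinear

section Radical

variable {K V W : Type*} [Field K] [AddCommMonoid V] [Module K V] [SMul K W]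

def quadRadical (Q : V → W) (hQ : ∀ (t : K) (x : V), Q (t • x) = t ^ 2 • Q x) :
    Submodule K V where
  carrier := {z | ∀ x, Q (x + z) = Q x}
  add_mem' {z w} hz hw x := by rw [← add_assoc, hw, hz]
  zero_mem' x := by rw [add_zero]
  smul_mem' t z hz x := by
    rcases eq_or_ne t 0 with rfl | ht
    · rw [zero_smul, add_zero]
    calc Q (x + t • z) = Q (t • (t⁻¹ • x + z)) := by rw [smul_add, smul_inv_smul₀ ht]
      _ = Q (t • (t⁻¹ • x)) := by rw [hQ, hz, ← hQ]
      _ = Q x := by rw [smul_inv_smul₀ ht]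

end Radical

section TwistedQuad

variable {F : Type*} [Field F] {σ : F →+* F} (T : F →ₗ[fixedSubfield σ] F) (u v : F)

def twistedQuad (y : F) : F := T (u * σ y * y + v * y ^ 2)

theorem twistedQuad_smul (t : fixedSubfield σ) (y : F) :
    twistedQuad T u v (t • y) = t ^ 2 • twistedQuad T u v y := by
  have ht : σ t = t := t.2
  rw [twistedQuad, twistedQuad, ← map_smul]
  congr 1
  simp only [Subfield.smul_def, smul_eq_mul, map_mul, ht, SubmonoidClass.coe_pow]
  ring

theorem twistedQuad_add (hTσ : ∀ y, T (σ y) = T y) (x z : F) :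
    twistedQuad T u v (x + z) = twistedQuad T u v x + twistedQuad T u v z +
      T (σ x * (σ u * σ (σ z) + σ (2 * v) * σ z + u * z)) := by
  have hcross : T (u * σ z * x + 2 * v * x * z) = T (σ x * (σ u * σ (σ z) + σ (2 * v) * σ z)) := by
    rw [← hTσ]
    congr 1
    simp only [map_add, map_mul]
    ring
  have hsplit : T (σ x * (σ u * σ (σ z) + σ (2 * v) * σ z + u * z)) =
      T (u * σ x * z) + T (u * σ z * x + 2 * v * x * z) := by
    rw [hcross, ← map_add]
    congr 1
    ring
  rw [hsplit]
  simp only [twistedQuad, ← map_add]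
  congr 1
  rw [map_add]
  ring

theorem quadRadical_twistedQuad_le_semilinearKer (hσ : Function.Surjective σ)
    (hTσ : ∀ y, T (σ y) = T y) (hT : ∀ c, (∀ y, T (c * y) = 0) → c = 0) :
    quadRadical (twistedQuad T u v) (twistedQuad_smul T u v) ≤
      semilinearKer σ (σ u) (σ (2 * v)) u := by
  intro z hz
  have hQz : twistedQuad T u v z = 0 := by simpa [twistedQuad] using hz 0
  change σ u * σ (σ z) + σ (2 * v) * σ z + u * z = 0
  refine hT _ fun y => ?_
  obtain ⟨x, rfl⟩ := hσ y
  have hxz := twistedQuad_add T u v hTσ x z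
  rw [hz x, hQz, add_zero, left_eq_add] at hxz
  rwa [mul_comm]

end TwistedQuad

theorem eq_zero_of_forall_algebraMap_trace_mul_eq_zero {K L : Type*} [Field K] [Field L]
    [Algebra K L] [FiniteDimensional K L] [Algebra.IsSeparable K L] {c : L}
    (hc : ∀ y, algebraMap K L (Algebra.trace K L (c * y)) = 0) : c = 0 :=
  (traceForm_nondegenerate K L).1 c fun y => by simpa using hc y

theorem relTrace_eq_algebraMap_trace {p e h : ℕ} {K F : Type*} [Field K] [Field F] [Finite F]
    [Algebra K F] (hK : Nat.card K = p ^ e) (hKF : finrank K F = h) (x : F) :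
    relTrace p e h x = algebraMap K F (Algebra.trace K F x) := by
  rw [FiniteField.algebraMap_trace_eq_sum_pow, hKF, hK]
  simp only [relTrace, pow_mul]

theorem pos_of_card_eq_pow {F : Type*} [Fintype F] [Nontrivial F] {p m : ℕ}
    (hcard : Fintype.card F = p ^ m) : 0 < m := by
  refine Nat.pos_of_ne_zero ?_
  rintro rfl
  exact Fintype.one_lt_card.ne' (by simpa using hcard)

section FiniteField

variable {p : ℕ} [hp : Fact p.Prime] {F : Type*} [Field F] [CharP F p] {m : ℕ}

theorem pow_pow_eq_self_iff_pow_pow_gcd [Fintype F] (hcard : Fintype.card F = p ^ m) (k : ℕ)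
    (x : F) :
    x ^ p ^ k = x ↔ x ^ p ^ Nat.gcd k m = x := by
  have hm : Function.IsPeriodicPt (frobenius F p) m x := by
    rw [Function.IsPeriodicPt, Function.IsFixedPt, iterate_frobenius, ← hcard, FiniteField.pow_card]
  simp only [← iterate_frobenius]
  refine ⟨fun hk => Function.IsPeriodicPt.gcd hk hm, fun hg => ?_⟩
  have hk := Function.IsPeriodicPt.mul_const hg (k / Nat.gcd k m)
  rwa [Nat.mul_div_cancel' (Nat.gcd_dvd_left k m)] at hk

open Polynomial in
theorem natCard_fixedSubfield_iterateFrobenius [Fintype F] (hcard : Fintype.card F = p ^ m)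
    (k : ℕ) :
    Nat.card (fixedSubfield (iterateFrobenius F p k)) = p ^ Nat.gcd k m := by
  have hm := pos_of_card_eq_pow hcard
  have hg := (Nat.gcd_pos_of_pos_right k hm).ne'
  have hsplit : (X ^ p ^ Nat.gcd k m - X : F[X]).Splits := by
    refine splits_X_pow_nat_card_sub_X.of_dvd ?_ ?_
    · rw [Nat.card_eq_fintype_card, hcard]
      exact FiniteField.X_pow_card_pow_sub_X_ne_zero F hm.ne' hp.out.one_lt
    · rw [Nat.card_eq_fintype_card, hcard]
      exact dvd_pow_pow_sub_self_of_dvd (Nat.gcd_dvd_right k m)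
  calc Nat.card (fixedSubfield (iterateFrobenius F p k))
      = Fintype.card ((X ^ p ^ Nat.gcd k m - X : F[X]).rootSet F) := by
        rw [← Nat.card_eq_fintype_card]
        refine Nat.card_congr (Equiv.subtypeEquivRight fun x => ?_)
        rw [mem_rootSet, RingHom.mem_eqLocusField, iterateFrobenius_def, RingHom.id_apply,
          pow_pow_eq_self_iff_pow_pow_gcd hcard]
        simp [FiniteField.X_pow_card_pow_sub_X_ne_zero F hg hp.out.one_lt, sub_eq_zero]
    _ = p ^ Nat.gcd k m := by
        rw [card_rootSet_eq_natDegree (galois_poly_separable p _ (dvd_pow_self p hg))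
          (by simpa using hsplit)]
        exact FiniteField.X_pow_card_pow_sub_X_natDegree_eq F hg hp.out.one_lt

theorem finrank_fixedSubfield_iterateFrobenius [Fintype F] (hcard : Fintype.card F = p ^ m)
    (k : ℕ) :
    finrank (fixedSubfield (iterateFrobenius F p k)) F = m / Nat.gcd k m := by
  have hF := Module.natCard_eq_pow_finrank (K := fixedSubfield (iterateFrobenius F p k)) (V := F)
  rw [Nat.card_eq_fintype_card, hcard, natCard_fixedSubfield_iterateFrobenius hcard, ← pow_mul]
    at hF
  exact (Nat.div_eq_of_eq_mul_left (Nat.gcd_pos_of_pos_right k (pos_of_card_eq_pow hcard))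
    ((Nat.pow_right_injective hp.out.two_le hF).trans (mul_comm _ _))).symm

theorem iterate_iterateFrobenius_div_gcd [Fintype F] (hcard : Fintype.card F = p ^ m) (k : ℕ)
    (x : F) :
    (iterateFrobenius F p k)^[m / Nat.gcd k m] x = x := by
  have hkm : k * (m / Nat.gcd k m) = m * (k / Nat.gcd k m) := by
    rw [← Nat.mul_div_assoc _ (Nat.gcd_dvd_right k m), mul_comm,
      Nat.mul_div_assoc _ (Nat.gcd_dvd_left k m)]
  rw [← iterateFrobenius_mul_apply, iterateFrobenius_def, hkm, pow_mul, ← hcard,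
    FiniteField.pow_card_pow]

variable (p) in
noncomputable def frobRadical (k : ℕ) (u v : F) :
    Submodule (fixedSubfield (iterateFrobenius F p k)) F :=
  quadRadical (twistedQuad ((Algebra.linearMap _ F).comp (Algebra.trace _ F)) u v)
    (twistedQuad_smul _ u v)

theorem natCard_frobRadical [Fintype F] (hcard : Fintype.card F = p ^ m) (k : ℕ) (u v : F) :
    Nat.card {z : F // ∀ x : F,
        relTrace p (Nat.gcd k m) (m / Nat.gcd k m) (u * (x + z) ^ (p ^ k + 1) + v * (x + z) ^ 2)
          = relTrace p (Nat.gcd k m) (m / Nat.gcd k m) (u * x ^ (p ^ k + 1) + v * x ^ 2)} =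
      p ^ (Nat.gcd k m *
        finrank (fixedSubfield (iterateFrobenius F p k)) (frobRadical p k u v)) := by
  have hE := natCard_fixedSubfield_iterateFrobenius hcard k
  rw [pow_mul, ← hE, ← Module.natCard_eq_pow_finrank]
  refine Nat.card_congr (Equiv.subtypeEquivRight fun z => forall_congr' fun x => ?_)
  simp only [relTrace_eq_algebraMap_trace hE (finrank_fixedSubfield_iterateFrobenius hcard k),
    pow_succ _ (p ^ k), ← mul_assoc]
  rfl

theorem frobRadical_le_semilinearKer [Fintype F] (k : ℕ) (u v : F) :
    frobRadical p k u v ≤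
      semilinearKer (iterateFrobenius F p k) (iterateFrobenius F p k u)
        (iterateFrobenius F p k (2 * v)) u := by
  have hσ : Function.Bijective (iterateFrobenius F p k) :=
    Finite.injective_iff_bijective.mp (iterateFrobenius F p k).injective
  exact quadRadical_twistedQuad_le_semilinearKer _ u v hσ.2
    (fun y => congrArg (algebraMap _ F) (trace_fixedSubfield_map hσ y))
    (fun _ => eq_zero_of_forall_algebraMap_trace_mul_eq_zero
      (K := fixedSubfield (iterateFrobenius F p k)) (L := F))

end FiniteField

theorem rank_of_Quv_general (p m k : ℕ) (hp : p.Prime) (hodd : Odd p)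
    (e h : ℕ) (he : e = Nat.gcd k m) (hh : h = m / e) (hge : 3 ≤ h) (hoddh : Odd h)
    (F : Type*) [Field F] [Fintype F] (hcard : Fintype.card F = p ^ m)
    (u v : F) (huv : (u, v) ≠ (0, 0)) :
    ∃ r : ℕ, (r = h ∨ r = h - 1 ∨ r = h - 2) ∧
      Nat.card {z : F // ∀ x : F,
          relTrace p e h (u * (x + z) ^ (p ^ k + 1) + v * (x + z) ^ 2)
            = relTrace p e h (u * x ^ (p ^ k + 1) + v * x ^ 2)}
        = p ^ (e * (h - r)) ∧
      (((u ≠ 0 ∧ v = 0) ∨ (u = 0 ∧ v ≠ 0)) → r = h) := by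
  have : Fact p.Prime := ⟨hp⟩
  have : CharP F p := charP_of_card_eq_prime_pow hcard
  subst he hh
  set σ := iterateFrobenius F p k
  set W := frobRadical p k u v
  have hWker := frobRadical_le_semilinearKer k u v
  have h2 : (2 : F) ≠ 0 :=
    Ring.two_ne_zero (by rw [ringChar.eq F p]; rintro rfl; exact absurd hodd (by decide))
  have hW0 : ((u ≠ 0 ∧ v = 0) ∨ (u = 0 ∧ v ≠ 0)) → W = ⊥ := by
    rintro (⟨hu, rfl⟩ | ⟨rfl, hv⟩)
    · rw [mul_zero, map_zero] at hWker
      exact eq_bot_mono hWker <| semilinearKer_eq_bot_of_odd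
        (iterate_iterateFrobenius_div_gcd hcard k) hoddh h2 hu
    · rw [map_zero] at hWker
      exact eq_bot_mono hWker <| semilinearKer_zero_zero_eq_bot <|
        (map_ne_zero σ).mpr (mul_ne_zero h2 hv)
  have hW2 : finrank (fixedSubfield σ) W ≤ 2 := by
    rcases eq_or_ne u 0 with rfl | hu
    · rw [hW0 (Or.inr ⟨rfl, fun hv => huv (by rw [hv])⟩), finrank_bot]
      norm_num
    · exact (Submodule.finrank_mono hWker).trans
        (finrank_semilinearKer_le_two ((map_ne_zero σ).mpr hu))
  refine ⟨m / Nat.gcd k m - finrank (fixedSubfield σ) W, by omega, ?_,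
    fun hs => by rw [hW0 hs, finrank_bot, Nat.sub_zero]⟩
  rw [Nat.sub_sub_self (by omega)]
  exact natCard_frobRadical hcard k u v

theorem rank_of_Quv (p m k : ℕ) (hp : p.Prime) (hodd : Odd p) (hk : 0 < k)
    (e h : ℕ) (he : e = Nat.gcd k m) (hh : h = m / e) (hge : 3 ≤ h) (hoddh : Odd h)
    (F : Type*) [Field F] [Fintype F] (hcard : Fintype.card F = p ^ m)
    (u v : F) (huv : (u, v) ≠ (0, 0)) :
    ∃ r : ℕ, (r = h ∨ r = h - 1 ∨ r = h - 2) ∧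
      Nat.card {z : F // ∀ x : F,
          relTrace p e h (u * (x + z) ^ (p ^ k + 1) + v * (x + z) ^ 2)
            = relTrace p e h (u * x ^ (p ^ k + 1) + v * x ^ 2)}
        = p ^ (e * (h - r)) ∧
      (((u ≠ 0 ∧ v = 0) ∨ (u = 0 ∧ v ≠ 0)) → r = h) :=
  rank_of_Quv_general p m k hp hodd e h he hh hge hoddh F hcard u v huv
end

section
/- Let p be an odd prime, m, k positive integers with m/gcd(k,m) ≥ 3 odd, e = gcd(k,m), h = m/e. For any (u,v) ∈ F_{p^m}² \ {(0,0)}, at least one of the quadratic forms Q_{u,v}(x) = Tr^m_e(u x^{p^k+1} + v x²) and Q_{u,−v}(x) = Tr^m_e(u x^{p^k+1} − v x²) over F_{p^e} has full rank h. -/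
theorem pow_pow_eq_self_of_pow_eq_self {M : Type*} [Monoid M] {x : M} {q : ℕ} (hx : x ^ q = x) :
    ∀ c : ℕ, x ^ q ^ c = x
  | 0 => pow_one x
  | c + 1 => by rw [pow_succ, pow_mul, pow_pow_eq_self_of_pow_eq_self hx c, hx]

section ExpChar

variable {R : Type*} [CommRing R] {p : ℕ} [ExpChar R p]

theorem pow_pow_mul_eq_neg_one_pow_mul {n : ℕ} {s : R} (hs : s ^ p ^ n = -s) :
    ∀ j : ℕ, s ^ p ^ (n * j) = (-1) ^ j * s
  | 0 => by simp
  | j + 1 => by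
    rw [mul_add_one, pow_add, pow_mul, pow_pow_mul_eq_neg_one_pow_mul hs j, mul_pow, hs,
      pow_right_comm, neg_one_pow_expChar_pow, pow_succ]
    ring

theorem eq_zero_of_pow_pow_eq_neg [NoZeroDivisors R] (h2 : (2 : R) ≠ 0) {n h : ℕ} (hh : Odd h)
    {s : R} (hs : s ^ p ^ n = -s) (hfix : s ^ p ^ (n * h) = s) : s = 0 := by
  have hsign := pow_pow_mul_eq_neg_one_pow_mul hs h
  rw [hfix, hh.neg_one_pow] at hsign
  have h2s : 2 * s = 0 := by linear_combination hsign
  exact (mul_eq_zero.mp h2s).resolve_left h2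

end ExpChar

theorem pow_pow_mul_eq_self_of_dvd {F : Type*} [Field F] [Fintype F] {p e h k : ℕ}
    (hcard : Fintype.card F = p ^ (e * h)) (hek : e ∣ k) (x : F) : x ^ p ^ (k * h) = x := by
  obtain ⟨c, rfl⟩ := hek
  rw [mul_right_comm, pow_mul, ← hcard, FiniteField.pow_card_pow]

/-- The map `L_w` of the proof sketch: `Tr(x · radicalMap p k h u w z)` is the polar form of
`Tr(u x^{p^k+1} + w x²)` once `x ↦ x^{p^{k(h-1)}}` inverts `x ↦ x^{p^k}`. -/
def radicalMap (p k h : ℕ) {F : Type*} [Field F] (u w z : F) : F :=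
  u * z ^ p ^ k + (u * z) ^ p ^ (k * (h - 1)) + 2 * w * z

section relTrace

variable {p e h : ℕ} {F : Type*} [Field F]

theorem relTrace_add [ExpChar F p] (a b : F) :
    relTrace p e h (a + b) = relTrace p e h a + relTrace p e h b := by
  simp only [relTrace, add_pow_expChar_pow, Finset.sum_add_distrib]

theorem relTrace_zero [ExpChar F p] : relTrace p e h (0 : F) = 0 := by
  simpa using relTrace_add (p := p) (e := e) (h := h) (0 : F) 0

theorem relTrace_pow_pow (hF : ∀ x : F, x ^ p ^ (e * h) = x) (a : F) :
    relTrace p e h (a ^ p ^ e) = relTrace p e h a := by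
  have hshift := Finset.sum_range_succ' (fun i => a ^ p ^ (e * i)) h
  have hlast := Finset.sum_range_succ (fun i => a ^ p ^ (e * i)) h
  simp only [relTrace, ← pow_mul, ← pow_add, add_comm e, ← mul_add_one]
  rw [hF] at hlast
  rw [mul_zero, pow_zero, pow_one] at hshift
  linear_combination hlast - hshift

theorem relTrace_pow_pow_of_dvd (hF : ∀ x : F, x ^ p ^ (e * h) = x) (a : F) {n : ℕ}
    (hn : e ∣ n) : relTrace p e h (a ^ p ^ n) = relTrace p e h a := by
  obtain ⟨t, rfl⟩ := hn
  induction t with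
  | zero => simp
  | succ t ih => rw [mul_add_one, pow_add, pow_mul, relTrace_pow_pow hF, ih]

theorem relTrace_mul_pow_pow [Fintype F] {k : ℕ} (hcard : Fintype.card F = p ^ (e * h))
    (hek : e ∣ k) (a x : F) :
    relTrace p e h (a * x ^ p ^ k) = relTrace p e h (x * a ^ p ^ (k * (h - 1))) := by
  have hF (y : F) : y ^ p ^ (e * h) = y := by rw [← hcard, FiniteField.pow_card]
  have hh : h ≠ 0 := by
    rintro rfl
    simpa [hcard] using (Fintype.one_lt_card (α := F))
  rw [← relTrace_pow_pow_of_dvd hF _ (hek.mul_right (h - 1)), mul_pow, ← pow_mul, ← pow_add,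
    ← mul_one_add, Nat.add_sub_cancel' (Nat.one_le_iff_ne_zero.mpr hh),
    pow_pow_mul_eq_self_of_dvd hcard hek, mul_comm]

open Polynomial in
theorem relTrace_exists_ne_zero [Fintype F] (hcard : Fintype.card F = p ^ (e * h)) :
    ∃ x : F, relTrace p e h x ≠ 0 := by
  have hcard_gt : 1 < p ^ (e * h) := hcard ▸ Fintype.one_lt_card
  have heh : e * h ≠ 0 := by rintro h0; simp [h0] at hcard_gt
  have hp : 1 < p := (Nat.one_lt_pow_iff heh).mp hcard_gt
  obtain ⟨he, hh⟩ := mul_ne_zero_iff.mp heh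
  set P : F[X] := ∑ i ∈ Finset.range h, X ^ p ^ (e * i)
  have hP : P.coeff 1 = 1 := by
    simp [P, coeff_X_pow, eq_comm (a := 1), hp.ne', he, Nat.pos_of_ne_zero hh]
  have hdeg : P.natDegree < Fintype.card F := by
    refine hcard ▸ (natDegree_sum_le_of_forall_le _ _ (n := p ^ (e * (h - 1)))
      fun i hi => ?_).trans_lt ?_
    · rw [natDegree_X_pow]
      exact Nat.pow_le_pow_right (by omega) (Nat.mul_le_mul_left e (by simp at hi; omega))
    · exact Nat.pow_lt_pow_right hp (Nat.mul_lt_mul_of_pos_left (by omega) (by omega))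
  by_contra! hzero
  have hP0 := eq_zero_of_natDegree_lt_card_of_eval_eq_zero P Function.injective_id
    (fun x => by simpa [P, eval_finsetSum, relTrace] using hzero x) hdeg
  simp [hP0] at hP

theorem eq_zero_of_forall_relTrace_mul_eq_zero [Fintype F] (hcard : Fintype.card F = p ^ (e * h))
    {c : F} (hc : ∀ x : F, relTrace p e h (x * c) = 0) : c = 0 := by
  by_contra hc0
  obtain ⟨x, hx⟩ := relTrace_exists_ne_zero hcard
  exact hx (by simpa [hc0] using hc (x * c⁻¹))

theorem radicalMap_eq_zero [ExpChar F p] [Fintype F] {k : ℕ}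
    (hcard : Fintype.card F = p ^ (e * h)) (hek : e ∣ k) {u w z : F}
    (hz : ∀ x : F, relTrace p e h (u * (x + z) ^ (p ^ k + 1) + w * (x + z) ^ 2)
      = relTrace p e h (u * x ^ (p ^ k + 1) + w * x ^ 2)) :
    radicalMap p k h u w z = 0 := by
  have hexpand (x : F) : u * (x + z) ^ (p ^ k + 1) + w * (x + z) ^ 2
      = (u * x ^ (p ^ k + 1) + w * x ^ 2) + (u * z * x ^ p ^ k + x * (u * z ^ p ^ k + 2 * w * z))
        + (u * z ^ (p ^ k + 1) + w * z ^ 2) := by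
    rw [pow_succ, pow_succ, add_pow_expChar_pow]
    ring
  have hQz : relTrace p e h (u * z ^ (p ^ k + 1) + w * z ^ 2) = 0 := by
    simpa [relTrace_zero, zero_pow (expChar_pow_pos F p k).ne'] using hz 0
  refine eq_zero_of_forall_relTrace_mul_eq_zero hcard fun x => ?_
  have hx := hz x
  rw [hexpand, relTrace_add, relTrace_add (u * x ^ (p ^ k + 1) + w * x ^ 2), hQz, add_zero,
    add_eq_left, relTrace_add, relTrace_mul_pow_pow hcard hek, ← relTrace_add] at hx
  rw [← hx, radicalMap]
  congr 1
  ring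

end relTrace

theorem eq_zero_or_eq_zero_of_radicalMap_eq_zero {F : Type*} [Field F] {p k h : ℕ} [ExpChar F p]
    (h2 : (2 : F) ≠ 0) (hh : Odd h) (hfix : ∀ x : F, x ^ p ^ (k * h) = x) {u v z z' : F}
    (huv : (u, v) ≠ (0, 0)) (hz : radicalMap p k h u v z = 0)
    (hz' : radicalMap p k h u (-v) z' = 0) : z = 0 ∨ z' = 0 := by
  set K := k * (h - 1)
  have hinv (x : F) : (x ^ p ^ k) ^ p ^ K = x := by
    rw [← pow_mul, ← pow_add, ← mul_one_add, add_tsub_cancel_of_le (show 1 ≤ h from hh.pos), hfix]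
  have hfixK (x : F) : x ^ p ^ (K * h) = x := by
    rw [mul_right_comm, pow_mul, pow_pow_eq_self_of_pow_eq_self (hfix x)]
  unfold radicalMap at hz hz'
  rw [mul_pow] at hz hz'
  by_cases hu : u = 0
  · have hv : v ≠ 0 := by rintro rfl; exact huv (by rw [hu])
    subst hu
    rw [zero_mul, zero_pow (expChar_pow_pos F p K).ne', zero_mul, zero_add, zero_add] at hz
    exact .inl ((mul_eq_zero.mp hz).resolve_left (mul_ne_zero h2 hv))
  set A := z ^ p ^ k * z' + z' ^ p ^ k * z
  have hA : A = 0 := by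
    have hneg : (u * A) ^ p ^ K = -(u * A) := by
      have : (u * A) ^ p ^ K = u ^ p ^ K * (z * z' ^ p ^ K + z' * z ^ p ^ K) := by
        rw [mul_pow, add_pow_expChar_pow, mul_pow, mul_pow, hinv, hinv]
      linear_combination this + z' * hz + z * hz'
    exact (mul_eq_zero.mp (eq_zero_of_pow_pow_eq_neg h2 hh hneg (hfixK _))).resolve_left hu
  refine or_iff_not_imp_left.mpr fun hz0 => ?_
  have hneg : (z' / z) ^ p ^ k = -(z' / z) := by
    rw [div_pow, div_eq_iff (pow_ne_zero _ hz0)]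
    field_simp
    linear_combination hA
  exact (div_eq_zero_iff.mp (eq_zero_of_pow_pow_eq_neg h2 hh hneg (hfix _))).resolve_right hz0

theorem Nat.card_subtype_eq_one_of_forall_eq {α : Type*} {P : α → Prop} {a : α} (ha : P a)
    (h : ∀ x, P x → x = a) : Nat.card {x // P x} = 1 :=
  Nat.card_eq_one_iff_exists.mpr ⟨⟨a, ha⟩, fun x => Subtype.ext (h x x.2)⟩

theorem one_of_Quv_Qu_neg_v_full_rank_general (p m k : ℕ) (hp : p.Prime) (hodd : Odd p)
    (e h : ℕ) (he : e = Nat.gcd k m) (hh : h = m / e)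
    (hoddh : Odd h)
    (F : Type*) [Field F] [Fintype F] (hcard : Fintype.card F = p ^ m)
    (u v : F) (huv : (u, v) ≠ (0, 0)) :
    Nat.card {z : F // ∀ x : F,
        relTrace p e h (u * (x + z) ^ (p ^ k + 1) + v * (x + z) ^ 2)
          = relTrace p e h (u * x ^ (p ^ k + 1) + v * x ^ 2)} = 1 ∨
    Nat.card {z : F // ∀ x : F,
        relTrace p e h (u * (x + z) ^ (p ^ k + 1) - v * (x + z) ^ 2)
          = relTrace p e h (u * x ^ (p ^ k + 1) - v * x ^ 2)} = 1 := by
  have : Fact p.Prime := ⟨hp⟩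
  have : CharP F p := charP_of_card_eq_prime_pow hcard
  have hek : e ∣ k := he ▸ Nat.gcd_dvd_left k m
  have hcard' : Fintype.card F = p ^ (e * h) := by
    rw [hcard, hh, Nat.mul_div_cancel' (he ▸ Nat.gcd_dvd_right k m)]
  have h2 : (2 : F) ≠ 0 := Ring.two_ne_zero <| by
    rw [ringChar.eq F p]; rintro rfl; exact Nat.not_odd_iff_even.mpr even_two hodd
  by_cases hplus : ∀ z : F, (∀ x : F,
      relTrace p e h (u * (x + z) ^ (p ^ k + 1) + v * (x + z) ^ 2)
        = relTrace p e h (u * x ^ (p ^ k + 1) + v * x ^ 2)) → z = 0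
  · exact .inl (Nat.card_subtype_eq_one_of_forall_eq (by simp) hplus)
  push Not at hplus
  obtain ⟨z, hz, hz0⟩ := hplus
  refine .inr (Nat.card_subtype_eq_one_of_forall_eq (a := 0) (by simp) fun z' hz' => ?_)
  have hz'_neg := radicalMap_eq_zero (w := -v) hcard' hek
    (by simpa only [neg_mul, ← sub_eq_add_neg] using hz')
  exact (eq_zero_or_eq_zero_of_radicalMap_eq_zero h2 hoddh (pow_pow_mul_eq_self_of_dvd hcard' hek)
    huv (radicalMap_eq_zero hcard' hek hz) hz'_neg).resolve_left hz0

theorem one_of_Quv_Qu_neg_v_full_rank (p m k : ℕ) (hp : p.Prime) (hodd : Odd p)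
    (hk : 0 < k) (e h : ℕ) (he : e = Nat.gcd k m) (hh : h = m / e)
    (hge : 3 ≤ h) (hoddh : Odd h)
    (F : Type*) [Field F] [Fintype F] (hcard : Fintype.card F = p ^ m)
    (u v : F) (huv : (u, v) ≠ (0, 0)) :
    Nat.card {z : F // ∀ x : F,
        relTrace p e h (u * (x + z) ^ (p ^ k + 1) + v * (x + z) ^ 2)
          = relTrace p e h (u * x ^ (p ^ k + 1) + v * x ^ 2)} = 1 ∨
    Nat.card {z : F // ∀ x : F,
        relTrace p e h (u * (x + z) ^ (p ^ k + 1) - v * (x + z) ^ 2)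
          = relTrace p e h (u * x ^ (p ^ k + 1) - v * x ^ 2)} = 1 :=
  one_of_Quv_Qu_neg_v_full_rank_general p m k hp hodd e h he hh hoddh F hcard u v huv
end
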